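/- arXiv:2406.19484 — 3 statements merged into one kernel-verified Lean document; each statement's English description precedes it below -/
import Mathlib

section
/- Let A be an AW*-algebra (a C*-algebra whose center is an AW*-algebra suffices), and let v be a unitary in A with v^n central for some n ≥ 1. Then there exists a self-adjoint element t in the center Z(A) such that v^n = e^{it}, and the unitary u = e^{-it/n} v satisfies u^n = 1 and Ad(u) = Ad(v). -/
open NormedSpace

/-!
Sakai's lemma gives a central self-adjoint `t` with `v ^ n = e^{it}`. Since `t` is central,
`z = e^{-it/n}` is a central unitary commuting with `v`, so `(z v)^n = z^n v^n = e^{-it} e^{it} = 1`,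
and conjugation by the central unitary `z` is trivial, whence `Ad (z v) = Ad v`.
-/

theorem mul_mul_star_mul_of_mem_center_of_mem_unitary {R : Type*} [Monoid R] [StarMul R] {z : R}
    (hz : z ∈ Set.center R) (hzu : z ∈ unitary R) (v x : R) :
    z * v * x * star (z * v) = v * x * star v :=
  calc z * v * x * star (z * v) = z * (v * x * star v) * star z := by
        simp only [star_mul, mul_assoc]
    _ = v * x * star v * (z * star z) := by
        rw [(Set.mem_center_iff.mp hz).comm (v * x * star v), mul_assoc]
    _ = v * x * star v := by rw [Unitary.mul_star_self_of_mem hzu, mul_one]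

theorem exp_mem_center {𝔸 : Type*} [Ring 𝔸] [TopologicalSpace 𝔸] [IsTopologicalRing 𝔸]
    [T2Space 𝔸] {x : 𝔸} (hx : x ∈ Set.center 𝔸) : exp x ∈ Set.center 𝔸 :=
  Semigroup.mem_center_iff.mpr fun y ↦ (((Set.mem_center_iff.mp hx).comm y).exp_left).eq.symm

section Exp

variable {𝔸 : Type*} [NormedRing 𝔸] [NormedAlgebra ℚ 𝔸] [CompleteSpace 𝔸]

theorem exp_neg_mul_exp (x : 𝔸) : exp (-x) * exp x = 1 := by
  rw [← exp_add_of_commute (Commute.refl x).neg_left, neg_add_cancel, exp_zero]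

theorem exp_mul_pow_of_commute {x v : 𝔸} (hxv : Commute x v) (n : ℕ) :
    (exp x * v) ^ n = exp (n • x) * v ^ n := by
  rw [hxv.exp_left.mul_pow, exp_nsmul]

end Exp

/-- Let `A` be a unital C*-algebra whose center has the AW*-property that every
central unitary admits a self-adjoint central logarithm (Sakai's lemma, valid in any
AW*-algebra).  If `v` is a unitary with `v ^ n` central for some `n ≥ 1`, then there is a
self-adjoint `t` in the center with `v ^ n = e^{it}`, and the unitary
`u = e^{-it/n} * v` satisfies `u ^ n = 1` and `Ad u = Ad v`. -/
theorem stmt3 {A : Type*} [CStarAlgebra A]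
    (hlog : ∀ w : A, w ∈ Set.center A → w ∈ unitary A →
      ∃ t : A, t ∈ Set.center A ∧ IsSelfAdjoint t ∧ w = exp (Complex.I • t))
    (v : A) (hv : v ∈ unitary A) (n : ℕ) (hn : 1 ≤ n) (hvn : v ^ n ∈ Set.center A) :
    ∃ t : A, t ∈ Set.center A ∧ IsSelfAdjoint t ∧ v ^ n = exp (Complex.I • t) ∧
      (exp ((-(Complex.I / (n : ℂ))) • t) * v) ^ n = 1 ∧
      ∀ x : A,
        (exp ((-(Complex.I / (n : ℂ))) • t) * v) * x *
            star (exp ((-(Complex.I / (n : ℂ))) • t) * v) = v * x * star v := by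
  let +nondep : NormedAlgebra ℚ A := .restrictScalars ℚ ℂ A
  obtain ⟨t, htc, hts, hvt⟩ := hlog (v ^ n) hvn (pow_mem hv n)
  set c : ℂ := -(Complex.I / n)
  have hctc : c • t ∈ Set.center A := Set.smul_mem_center c htc
  have hc_skew : c ∈ skewAdjoint ℂ := by
    simp [c, skewAdjoint.mem_iff, Complex.conj_I, neg_div]
  have hcn : n • (c • t) = -(Complex.I • t) := by
    have hn0 : (n : ℂ) ≠ 0 := Nat.cast_ne_zero.mpr (by omega)
    rw [← Nat.cast_smul_eq_nsmul ℂ, smul_smul, ← neg_smul]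
    congr 1
    simp only [c]
    field_simp
  refine ⟨t, htc, hts, hvt, ?_, mul_mul_star_mul_of_mem_center_of_mem_unitary
    (exp_mem_center hctc) (exp_mem_unitary_of_mem_skewAdjoint (hts.smul_mem_skewAdjoint hc_skew)) v⟩
  rw [exp_mul_pow_of_commute ((Set.mem_center_iff.mp hctc).comm v), hcn, hvt, exp_neg_mul_exp]
end

section
/- Let A be an AW*-algebra, G = ⟨g⟩ a discrete cyclic group, and α : G → Aut(A) a group homomorphism. If α_g is an inner automorphism, then there exists a unitary representation u : G → U(A) such that α_h = Ad(u_h) for all h ∈ G. -/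
/-!
Write `α g = Ad v`. If `g` has finite order `n`, then `Ad (v ^ n) = α (g ^ n) = id`, so `v ^ n`
is a central unitary. The AW*-property gives it a central self-adjoint logarithm `t`, hence a
central `n`-th root `e = exp (i t / n)`; the unitary `w = v e⁻¹` still implements `α g` and now
satisfies `w ^ n = 1`. Thus `g ↦ w` extends to a homomorphism `u : G → U(A)`, and `α` and
`Ad ∘ u` agree because they agree on the generator `g`.
-/

open NormedSpace Unitary

namespace Unitary

variable {S R : Type*} [Semiring R] [StarMul R] [SMul S R] [IsScalarTower S R R]
  [SMulCommClass S R R]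

theorem conjStarAlgAut_eq_one_iff_mem_center (u : unitary R) :
    conjStarAlgAut S R u = 1 ↔ (u : R) ∈ Set.center R := by
  rw [Semigroup.mem_center_iff]
  constructor
  · intro h a
    have ha : (u : R) * a * star (u : R) = a := congr($h a)
    calc a * u = u * a * star (u : R) * u := by rw [ha]
      _ = u * a := by rw [mul_assoc _ (star (u : R)), star_mul_self_of_mem u.2, mul_one]
  · intro h
    ext a
    rw [conjStarAlgAut_apply, ← h, mul_assoc, mul_star_self_of_mem u.2, mul_one]
    rfl

end Unitary

namespace selfAdjoint

variable {A : Type*} [NormedRing A] [NormedAlgebra ℂ A] [StarRing A] [ContinuousStar A]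
  [CompleteSpace A] [StarModule ℂ A]

theorem expUnitary_nsmul (a : selfAdjoint A) (n : ℕ) : expUnitary (n • a) = expUnitary a ^ n := by
  induction n with
  | zero => simp
  | succ n ih =>
    rw [succ_nsmul, (Commute.refl (a : A)).smul_left n |>.expUnitary_add, ih, pow_succ]

theorem expUnitary_mem_center {a : selfAdjoint A} (ha : (a : A) ∈ Set.center A) :
    (expUnitary a : A) ∈ Set.center A := by
  rw [Semigroup.mem_center_iff] at ha ⊢
  intro b
  exact (Commute.smul_right (ha b) Complex.I).exp_right

end selfAdjoint

section CStarAlgebra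

def CentralUnitariesHaveCentralLog (A : Type*) [CStarAlgebra A] : Prop :=
  ∀ w : A, w ∈ Set.center A → w ∈ unitary A →
    ∃ t : A, t ∈ Set.center A ∧ IsSelfAdjoint t ∧ w = exp (Complex.I • t)

variable {A : Type*} [CStarAlgebra A]

theorem CentralUnitariesHaveCentralLog.exists_mem_center_pow_eq
    (hlog : CentralUnitariesHaveCentralLog A) {p : unitary A} (hp : (p : A) ∈ Set.center A)
    {n : ℕ} (hn : n ≠ 0) : ∃ e : unitary A, (e : A) ∈ Set.center A ∧ e ^ n = p := by
  obtain ⟨t, htc, hts, htp⟩ := hlog p hp p.2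
  let s : selfAdjoint A := (n : ℝ)⁻¹ • ⟨t, hts⟩
  refine ⟨selfAdjoint.expUnitary s, selfAdjoint.expUnitary_mem_center ?_, ?_⟩
  · exact Set.smul_mem_center _ htc
  · have hns : n • s = ⟨t, hts⟩ := by
      rw [← Nat.cast_smul_eq_nsmul ℝ, smul_smul, mul_inv_cancel₀ (Nat.cast_ne_zero.2 hn), one_smul]
    ext
    rw [← selfAdjoint.expUnitary_nsmul, hns, selfAdjoint.expUnitary_coe, htp]

theorem CentralUnitariesHaveCentralLog.exists_conjStarAlgAut_eq_orderOf_dvd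
    (hlog : CentralUnitariesHaveCentralLog A) (v : unitary A) {n : ℕ}
    (hv : conjStarAlgAut ℂ A (v ^ n) = 1) :
    ∃ w : unitary A, conjStarAlgAut ℂ A w = conjStarAlgAut ℂ A v ∧ orderOf w ∣ n := by
  rcases eq_or_ne n 0 with rfl | hn
  · exact ⟨v, rfl, dvd_zero _⟩
  obtain ⟨e, he, hen⟩ :=
    hlog.exists_mem_center_pow_eq ((conjStarAlgAut_eq_one_iff_mem_center _).1 hv) hn
  have hconj_e : conjStarAlgAut ℂ A e = 1 := (conjStarAlgAut_eq_one_iff_mem_center e).2 he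
  have hve : Commute v e := Subtype.ext (Semigroup.mem_center_iff.1 he v)
  refine ⟨v * e⁻¹, by rw [map_mul, map_inv, hconj_e, inv_one, mul_one],
    orderOf_dvd_of_pow_eq_one ?_⟩
  rw [hve.inv_right.mul_pow, inv_pow, hen, mul_inv_cancel]

end CStarAlgebra

theorem stmt4_general {A : Type*} [CStarAlgebra A]
    (hlog : ∀ w : A, w ∈ Set.center A → w ∈ unitary A →
      ∃ t : A, t ∈ Set.center A ∧ IsSelfAdjoint t ∧ w = exp (Complex.I • t))
    {G : Type*} [Group G] (g : G) (hcyc : ∀ x : G, x ∈ Subgroup.zpowers g)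
    (α : G → (A ≃⋆ₐ[ℂ] A))
    (hαmul : ∀ (x y : G) (a : A), α (x * y) a = α x (α y a))
    (v : A) (hv : v ∈ unitary A) (hinner : ∀ a : A, α g a = v * a * star v) :
    ∃ u : G →* unitary A, ∀ (h : G) (a : A), α h a = (u h : A) * a * star ((u h : A)) := by
  let αhom : G →* (A ≃⋆ₐ[ℂ] A) := MonoidHom.mk' α fun x y ↦ StarAlgEquiv.ext (hαmul x y)
  have hαg : αhom g = conjStarAlgAut ℂ A ⟨v, hv⟩ := StarAlgEquiv.ext hinner
  obtain ⟨w, hw, hdvd⟩ :=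
    CentralUnitariesHaveCentralLog.exists_conjStarAlgAut_eq_orderOf_dvd hlog ⟨v, hv⟩
      (n := orderOf g) (by rw [map_pow, ← hαg, ← map_pow, pow_orderOf_eq_one, map_one])
  let u := monoidHomOfForallMemZpowers hcyc hdvd
  have hαu : αhom = (conjStarAlgAut ℂ A).comp u := by
    refine MonoidHom.eq_of_eqOn_dense (s := {g}) ?_ ?_
    · rw [← Subgroup.zpowers_eq_closure]
      exact (Subgroup.eq_top_iff' _).2 hcyc
    · simp [u, hαg, hw]
  exact ⟨u, fun h a ↦ congr($hαu h a)⟩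

/-- Let `A` be an AW*-algebra — formalized as a unital C*-algebra in which every
central unitary admits a self-adjoint central logarithm (the property of AW*-algebras used
in the proof, via Sakai's lemma) — let `G = ⟨g⟩` be a discrete cyclic group, and
`α : G → Aut(A)` a homomorphism.  If `α g` is inner, then there is a unitary representation
`u : G → U(A)` with `α h = Ad (u h)` for all `h ∈ G`. -/
theorem stmt4 {A : Type*} [CStarAlgebra A]
    (hlog : ∀ w : A, w ∈ Set.center A → w ∈ unitary A →
      ∃ t : A, t ∈ Set.center A ∧ IsSelfAdjoint t ∧ w = exp (Complex.I • t))
    {G : Type*} [Group G] (g : G) (hcyc : ∀ x : G, x ∈ Subgroup.zpowers g)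
    (α : G → (A ≃⋆ₐ[ℂ] A))
    (hα1 : ∀ a : A, α 1 a = a)
    (hαmul : ∀ (x y : G) (a : A), α (x * y) a = α x (α y a))
    (v : A) (hv : v ∈ unitary A) (hinner : ∀ a : A, α g a = v * a * star v) :
    ∃ u : G →* unitary A, ∀ (h : G) (a : A), α h a = (u h : A) * a * star ((u h : A)) :=
  stmt4_general hlog g hcyc α hαmul v hv hinner
end

section
/- Let A ⊆ B(H) be a unital C*-subalgebra and θ : B(H) → M a positive unital map into a von Neumann subalgebra M ⊆ B(H) containing A, with θ(x) = x for all x ∈ M and θ faithful. Then M is closed under suprema of bounded increasing nets from M_sa taken in B(H): if {x_i} ⊆ M_sa increases to x ∈ B(H)_sa, then x ∈ M. -/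
/-- Let `A ⊆ B(H)` be a unital C*-subalgebra and `θ : B(H) → M` a positive
unital linear map into a von Neumann subalgebra `M ⊆ B(H)` containing `A`, with `θ x = x`
for all `x ∈ M` and `θ` faithful.  Then `M` is closed under suprema (in the Loewner order
of `B(H)`) of bounded increasing nets of self-adjoint elements of `M`: if `{x_i} ⊆ M_sa`
increases to `x ∈ B(H)_sa`, then `x ∈ M`. -/
theorem stmt13 {H : Type*} [NormedAddCommGroup H] [InnerProductSpace ℂ H] [CompleteSpace H]
    (A : StarSubalgebra ℂ (H →L[ℂ] H)) (M : VonNeumannAlgebra H)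
    (hAM : ∀ a : H →L[ℂ] H, a ∈ A → a ∈ M)
    (θ : (H →L[ℂ] H) →ₗ[ℂ] (H →L[ℂ] H))
    (hθM : ∀ x : H →L[ℂ] H, θ x ∈ M)
    (hθpos : ∀ x : H →L[ℂ] H, 0 ≤ x → 0 ≤ θ x)
    (hθ1 : θ 1 = 1)
    (hθid : ∀ x : H →L[ℂ] H, x ∈ M → θ x = x)
    (hθfaith : ∀ p : H →L[ℂ] H, 0 ≤ p → θ p = 0 → p = 0)
    {ι : Type*} [Preorder ι] (x : ι → (H →L[ℂ] H)) (hmono : Monotone x)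
    (hxM : ∀ i, x i ∈ M) (hxsa : ∀ i, IsSelfAdjoint (x i))
    (xx : H →L[ℂ] H) (hsa : IsSelfAdjoint xx) (hlub : IsLUB (Set.range x) xx) :
    xx ∈ M := by
  have hθmono : ∀ a b : H →L[ℂ] H, a ≤ b → θ a ≤ θ b := by
    intro a b hab
    have := hθpos (b - a) (sub_nonneg.mpr hab)
    rw [map_sub] at this
    exact sub_nonneg.mp this
  have hub : θ xx ∈ upperBounds (Set.range x) := by
    rintro y ⟨i, rfl⟩
    have h1 : x i ≤ xx := hlub.1 (Set.mem_range_self i)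
    have h2 := hθmono _ _ h1
    rwa [hθid _ (hxM i)] at h2
  have h2 : xx ≤ θ xx := hlub.2 hub
  have h3 : θ (θ xx - xx) = 0 := by
    rw [map_sub, hθid _ (hθM xx), sub_self]
  have h4 : θ xx - xx = 0 := hθfaith _ (sub_nonneg.mpr h2) h3
  have h5 : θ xx = xx := sub_eq_zero.mp h4
  rw [← h5]
  exact hθM xx
end
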